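/- Let p, q ≥ 1 with p + q ≥ 4. Then the characteristic polynomial of the adjacency matrix of the complete subdivision graph of K_{p,q}, a graph on p+q+pq vertices, equals x·(x+1)^{pq−p−q+1}·(x² + x − p)^{q−1}·(x² + x − q)^{p−1}·(x² − (pq−1)x − (p+q)). -/

import Mathlib

open Matrix SimpleGraph

/-- The vertex–edge incidence matrix of a graph, relative to an enumeration
`e` of its edges. -/
noncomputable def incMat {V : Type} [Fintype V] [DecidableEq V] {m : ℕ}
    (G : SimpleGraph V) [Fintype G.edgeSet] (e : Fin m ≃ G.edgeFinset) :
    Matrix V (Fin m) ℝ :=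
  Matrix.of fun i j => if i ∈ (e j : Sym2 V) then (1 : ℝ) else 0

instance (p q : ℕ) : DecidableRel (completeBipartiteGraph (Fin p) (Fin q)).Adj := by
  intro a b; unfold completeBipartiteGraph; dsimp; infer_instance

/-!
Write `N` for the vertex–edge incidence matrix of `K_{p,q}` and `J` for all-ones matrices. For
`x ≠ 0`, the Schur complement of the block `x • 1` reduces `det (x • 1 - A)` to
`x ^ (p + q) * det ((x + 1) • 1 - J - x⁻¹ • NᵀN)`. Indexing the edges by `Fin p × Fin q` gives
`NᵀN = 1 ⊗ J + J ⊗ 1`, so the Schur complement is `X ⊗ 1 + Y ⊗ J` with `X, Y` in the span of `1`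
and `J`. As `J` has rank one, Sylvester's identity `det (1 + U V) = det (1 + V U)` gives
`det (X ⊗ 1 + Y ⊗ J) = det X ^ (q - 1) * det (X + q • Y)`, and both factors are determinants of
the form `det (a • 1 + b • J) = a ^ (n - 1) * (a + n b)`. This proves the formula away from the
roots of `x (x + 1) (x² + x - p) (x² + x - q)`; both sides are polynomials in `x`, so it holds
everywhere.
-/

open Polynomial Kronecker

namespace Matrix

theorem allOnes_eq_replicateCol_mul_replicateRow {R ι : Type*} [Semiring R] :
    (Matrix.of fun _ _ => 1 : Matrix ι ι R) =
      replicateCol Unit (1 : ι → R) * replicateRow Unit (1 : ι → R) := by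
  ext i j
  simp [Matrix.mul_apply, replicateCol, replicateRow]

variable {K : Type*} [Field K] {m n : Type*} [Fintype m] [DecidableEq m] [Fintype n]
  [DecidableEq n]

theorem det_smul_one_add_smul_allOnes [Nonempty n] {a : K} (ha : a ≠ 0) (b : K) :
    det (a • (1 : Matrix n n K) + b • Matrix.of fun _ _ => 1) =
      a ^ (Fintype.card n - 1) * (a + Fintype.card n * b) := by
  have : a • (1 : Matrix n n K) + b • Matrix.of (fun _ _ => 1) =
      a • (1 + replicateCol Unit (fun _ : n => b / a) *
        replicateRow Unit (fun _ : n => (1 : K))) := by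
    ext i j
    by_cases h : i = j <;> simp [h, Matrix.mul_apply, mul_add, mul_div_cancel₀ _ ha]
  rw [this, det_smul, det_one_add_replicateCol_mul_replicateRow]
  obtain ⟨k, hk⟩ := Nat.exists_eq_add_one.mpr (Fintype.card_pos (α := n))
  simp only [dotProduct, one_mul, Finset.sum_const, Finset.card_univ, nsmul_eq_mul, hk,
    Nat.add_sub_cancel, pow_succ]
  field_simp

theorem det_kronecker_one_add_kronecker_allOnes {R : Type*} [CommRing R] [Nonempty n]
    {X : Matrix m m R} (hX : IsUnit X.det) (Y : Matrix m m R) :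
    det (X ⊗ₖ (1 : Matrix n n R) + Y ⊗ₖ Matrix.of fun _ _ => 1) =
      det X ^ (Fintype.card n - 1) * det (X + (Fintype.card n : R) • Y) := by
  set U : Matrix (m × n) (m × Unit) R := (X⁻¹ * Y) ⊗ₖ replicateCol Unit 1
  set V : Matrix (m × Unit) (m × n) R := (1 : Matrix m m R) ⊗ₖ replicateRow Unit 1
  have hfactor : X ⊗ₖ (1 : Matrix n n R) + Y ⊗ₖ Matrix.of (fun _ _ => 1) =
      (X ⊗ₖ 1) * (1 + U * V) := by
    rw [← mul_kronecker_mul, Matrix.mul_one, ← allOnes_eq_replicateCol_mul_replicateRow,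
      Matrix.mul_add, Matrix.mul_one, ← mul_kronecker_mul, Matrix.one_mul,
      mul_nonsing_inv_cancel_left _ _ hX]
  have hswap :
      1 + V * U = (1 + (Fintype.card n : R) • (X⁻¹ * Y)) ⊗ₖ (1 : Matrix Unit Unit R) := by
    rw [← mul_kronecker_mul, Matrix.one_mul, replicateRow_mul_replicateCol]
    ext ⟨i, _⟩ ⟨j, _⟩
    simp [Matrix.one_apply, dotProduct, mul_comm]
  have hXY : X + (Fintype.card n : R) • Y = X * (1 + (Fintype.card n : R) • (X⁻¹ * Y)) := by
    rw [Matrix.mul_add, Matrix.mul_one, Matrix.mul_smul, mul_nonsing_inv_cancel_left _ _ hX]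
  rw [hfactor, det_mul, det_one_add_mul_comm, hswap, det_kronecker, det_kronecker, hXY, det_mul]
  obtain ⟨k, hk⟩ : ∃ k, Fintype.card n = k + 1 := Nat.exists_eq_add_one.mpr Fintype.card_pos
  simp only [det_one, one_pow, mul_one, Fintype.card_unit, pow_one, hk, Nat.add_sub_cancel]
  ring

theorem det_smul_one_sub_fromBlocks_zero {x : K} (hx : x ≠ 0) (B : Matrix m n K)
    (C : Matrix n m K) (D : Matrix n n K) :
    det (x • 1 - fromBlocks 0 B C D) =
      x ^ Fintype.card m * det (x • 1 - D - x⁻¹ • (C * B)) := by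
  have hinv : (x • 1 : Matrix m m K) * (x⁻¹ • 1) = 1 := by
    rw [smul_mul_smul_comm, mul_inv_cancel₀ hx, Matrix.one_mul, one_smul]
  let := invertibleOfRightInverse _ _ hinv
  rw [← fromBlocks_one, fromBlocks_smul, sub_eq_add_neg, fromBlocks_neg, fromBlocks_add]
  simp only [smul_zero, neg_zero, add_zero, ← sub_eq_add_neg]
  rw [det_fromBlocks₁₁, invOf_eq_right_inv hinv, det_smul, det_one, mul_one]
  simp [Matrix.mul_smul, Matrix.smul_mul]

theorem det_smul_one_sub_eq_eval_of_eval_ne_zero {R : Type*} [CommRing R] [IsDomain R]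
    [Infinite R] (M : Matrix n n R) {P Q : R[X]} (hQ : Q ≠ 0)
    (h : ∀ x, Q.eval x ≠ 0 → det (x • 1 - M) = P.eval x) (x : R) :
    det (x • 1 - M) = P.eval x := by
  have hdet (y : R) : det (y • 1 - M) = M.charpoly.eval y := by
    rw [eval_charpoly, smul_one_eq_diagonal, scalar_apply]
  suffices M.charpoly = P by rw [hdet, this]
  refine eq_of_infinite_eval_eq _ _ ((finite_setOfPred_isRoot hQ).infinite_compl.mono ?_)
  intro y hy
  simpa [hdet] using h y hy

end Matrix

namespace SimpleGraph.completeBipartiteGraph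

noncomputable def edgeEquiv {α β : Type*} [Fintype (completeBipartiteGraph α β).edgeSet] :
    α × β ≃ (completeBipartiteGraph α β).edgeFinset :=
  Equiv.ofBijective (fun ij => ⟨s(Sum.inl ij.1, Sum.inr ij.2), by simp⟩) <| by
    refine ⟨fun ⟨i, j⟩ ⟨i', j'⟩ h => ?_, fun ⟨E, hE⟩ => ?_⟩
    · simpa using h
    · induction E using Sym2.inductionOn with
      | hf u v =>
        rcases u with i | j <;> rcases v with i' | j' <;> simp at hE
        · exact ⟨(i, j'), rfl⟩
        · exact ⟨(i', j), Subtype.ext Sym2.eq_swap⟩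

theorem coe_edgeEquiv {α β : Type*} [Fintype (completeBipartiteGraph α β).edgeSet]
    (ij : α × β) : (edgeEquiv ij : Sym2 (α ⊕ β)) = s(Sum.inl ij.1, Sum.inr ij.2) :=
  rfl

theorem incMat_transpose_mul_self {α β : Type} [Fintype α] [Fintype β] [DecidableEq α]
    [DecidableEq β] [Fintype (completeBipartiteGraph α β).edgeSet] {m : ℕ}
    (e : Fin m ≃ (completeBipartiteGraph α β).edgeFinset) :
    (incMat (completeBipartiteGraph α β) e)ᵀ * incMat (completeBipartiteGraph α β) e =
      ((1 : Matrix α α ℝ) ⊗ₖ (Matrix.of fun _ _ => 1) + (Matrix.of fun _ _ => 1) ⊗ₖ 1).submatrix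
        (e.trans edgeEquiv.symm) (e.trans edgeEquiv.symm) := by
  have he (k : Fin m) : (e k : Sym2 (α ⊕ β)) =
      s(Sum.inl (e.trans edgeEquiv.symm k).1, Sum.inr (e.trans edgeEquiv.symm k).2) := by
    rw [← coe_edgeEquiv, Equiv.trans_apply, Equiv.apply_symm_apply]
  ext k l
  simp only [Matrix.mul_apply, incMat, he, Fintype.sum_sum_type]
  simp [Matrix.one_apply, eq_comm]

theorem smul_one_sub_allOnes_sub_inv_smul_gram_eq_kronecker {α β : Type} [Fintype α] [Fintype β]
    [DecidableEq α] [DecidableEq β] [Fintype (completeBipartiteGraph α β).edgeSet] {m : ℕ}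
    (e : Fin m ≃ (completeBipartiteGraph α β).edgeFinset) (x : ℝ) :
    (x + 1) • (1 : Matrix (Fin m) (Fin m) ℝ) - Matrix.of (fun _ _ => 1) -
        x⁻¹ • ((incMat (completeBipartiteGraph α β) e)ᵀ *
          incMat (completeBipartiteGraph α β) e) =
      (((x + 1) • 1 + (-x⁻¹) • Matrix.of (fun _ _ => 1)) ⊗ₖ (1 : Matrix β β ℝ) +
          ((-x⁻¹) • 1 + (-1) • Matrix.of (fun _ _ => 1)) ⊗ₖ Matrix.of (fun _ _ => 1)).submatrix
        (e.trans edgeEquiv.symm) (e.trans edgeEquiv.symm) := by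
  rw [incMat_transpose_mul_self]
  set φ := e.trans edgeEquiv.symm
  have hφ (k l : Fin m) : k = l ↔ (φ k).1 = (φ l).1 ∧ (φ k).2 = (φ l).2 := by
    rw [← Prod.ext_iff, φ.injective.eq_iff]
  ext k l
  simp only [Matrix.sub_apply, Matrix.add_apply, Matrix.smul_apply, submatrix_apply,
    kroneckerMap_apply, one_apply, of_apply, hφ]
  split_ifs <;> simp_all <;> ring

end SimpleGraph.completeBipartiteGraph

noncomputable def completeSubdivisionAdjMatrix {V : Type} [Fintype V] [DecidableEq V]
    (G : SimpleGraph V) [Fintype G.edgeSet] {m : ℕ} (e : Fin m ≃ G.edgeFinset) :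
    Matrix (V ⊕ Fin m) (V ⊕ Fin m) ℝ :=
  fromBlocks 0 (incMat G e) (incMat G e)ᵀ (Matrix.of (fun _ _ => 1) - 1)

theorem det_smul_one_sub_completeSubdivisionAdjMatrix {V : Type} [Fintype V] [DecidableEq V]
    (G : SimpleGraph V) [Fintype G.edgeSet] {m : ℕ} (e : Fin m ≃ G.edgeFinset) {x : ℝ}
    (hx : x ≠ 0) :
    det (x • 1 - completeSubdivisionAdjMatrix G e) = x ^ Fintype.card V *
      det ((x + 1) • 1 - Matrix.of (fun _ _ => 1) - x⁻¹ • ((incMat G e)ᵀ * incMat G e)) := by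
  rw [completeSubdivisionAdjMatrix, det_smul_one_sub_fromBlocks_zero hx, add_smul, one_smul]
  abel_nf

theorem det_smul_one_sub_completeSubdivisionAdjMatrix_completeBipartiteGraph {p q : ℕ}
    (hp : 1 ≤ p) (hq : 1 ≤ q)
    (e : Fin (p * q) ≃ (completeBipartiteGraph (Fin p) (Fin q)).edgeFinset) {y : ℝ} (hy0 : y ≠ 0)
    (hy1 : y + 1 ≠ 0) (hyp : y ^ 2 + y - p ≠ 0) (hyq : y ^ 2 + y - q ≠ 0) :
    det (y • 1 - completeSubdivisionAdjMatrix (completeBipartiteGraph (Fin p) (Fin q)) e) =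
      y * (y + 1) ^ ((p - 1) * (q - 1)) * (y ^ 2 + y - p) ^ (q - 1) *
        (y ^ 2 + y - q) ^ (p - 1) * (y ^ 2 - (p * q - 1) * y - (p + q)) := by
  have : Nonempty (Fin p) := Fin.pos_iff_nonempty.mp hp
  have : Nonempty (Fin q) := Fin.pos_iff_nonempty.mp hq
  set X : Matrix (Fin p) (Fin p) ℝ := (y + 1) • 1 + (-y⁻¹) • Matrix.of fun _ _ => 1
  set Y : Matrix (Fin p) (Fin p) ℝ := (-y⁻¹) • 1 + (-1) • Matrix.of fun _ _ => 1
  have hdiv (c : ℝ) : y + 1 + c * -y⁻¹ = (y ^ 2 + y - c) / y := by field_simp; ring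
  have hdetX : det X = (y + 1) ^ (p - 1) * ((y ^ 2 + y - p) / y) := by
    rw [det_smul_one_add_smul_allOnes hy1, Fintype.card_fin, hdiv]
  have hdetXY : det (X + (q : ℝ) • Y) =
      ((y ^ 2 + y - q) / y) ^ (p - 1) * ((y ^ 2 - (p * q - 1) * y - (p + q)) / y) := by
    have hXY : X + (q : ℝ) • Y = (y + 1 + q * -y⁻¹) • 1 + (-y⁻¹ - q) • Matrix.of fun _ _ => 1 := by
      simp only [X, Y]
      module
    rw [hXY, det_smul_one_add_smul_allOnes (by rw [hdiv]; exact div_ne_zero hyq hy0),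
      Fintype.card_fin, hdiv]
    congr 1
    field_simp
    ring
  have hX : IsUnit X.det := by
    rw [hdetX, isUnit_iff_ne_zero]
    exact mul_ne_zero (pow_ne_zero _ hy1) (div_ne_zero hyp hy0)
  calc _ = y ^ (p + q) *
        det (X ⊗ₖ (1 : Matrix (Fin q) (Fin q) ℝ) + Y ⊗ₖ Matrix.of fun _ _ => 1) := by
        rw [det_smul_one_sub_completeSubdivisionAdjMatrix _ _ hy0,
          completeBipartiteGraph.smul_one_sub_allOnes_sub_inv_smul_gram_eq_kronecker,
          det_submatrix_equiv_self, Fintype.card_sum, Fintype.card_fin, Fintype.card_fin]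
    _ = y ^ (p + q) * (det X ^ (q - 1) * det (X + (q : ℝ) • Y)) := by
        rw [det_kronecker_one_add_kronecker_allOnes hX, Fintype.card_fin]
    _ = _ := by
        rw [hdetX, hdetXY]
        obtain ⟨a, rfl⟩ := Nat.exists_eq_add_of_le' hp
        obtain ⟨b, rfl⟩ := Nat.exists_eq_add_of_le' hq
        simp only [Nat.add_sub_cancel]
        push_cast
        rw [mul_pow, div_pow, div_pow, ← pow_mul]
        field_simp
        ring

theorem stmt_19_general (p q : ℕ) (hp : 1 ≤ p) (hq : 1 ≤ q)
    (e : Fin (p * q) ≃ (completeBipartiteGraph (Fin p) (Fin q)).edgeFinset)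
    (x : ℝ) :
    (x • (1 : Matrix ((Fin p ⊕ Fin q) ⊕ Fin (p * q)) ((Fin p ⊕ Fin q) ⊕ Fin (p * q)) ℝ) -
        Matrix.fromBlocks 0 (incMat (completeBipartiteGraph (Fin p) (Fin q)) e)
          (incMat (completeBipartiteGraph (Fin p) (Fin q)) e)ᵀ
          (Matrix.of (fun _ _ => (1 : ℝ)) - 1)).det
      = x * (x + 1) ^ ((p - 1) * (q - 1)) *
          (x ^ 2 + x - (p : ℝ)) ^ (q - 1) * (x ^ 2 + x - (q : ℝ)) ^ (p - 1) *
          (x ^ 2 - ((p : ℝ) * (q : ℝ) - 1) * x - ((p : ℝ) + (q : ℝ))) := by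
  refine (det_smul_one_sub_eq_eval_of_eval_ne_zero
    (completeSubdivisionAdjMatrix (completeBipartiteGraph (Fin p) (Fin q)) e)
    (P := X * (X + 1) ^ ((p - 1) * (q - 1)) * (X ^ 2 + X - C (p : ℝ)) ^ (q - 1) *
      (X ^ 2 + X - C (q : ℝ)) ^ (p - 1) * (X ^ 2 - C ((p : ℝ) * q - 1) * X - C ((p : ℝ) + q)))
    (Q := X * (X + 1) * (X ^ 2 + X - C (p : ℝ)) * (X ^ 2 + X - C (q : ℝ)))
    (Monic.ne_zero (by monicity!)) (fun y hy => ?_) x).trans (by simp)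
  simp only [eval_mul, eval_add, eval_sub, eval_pow, eval_X, eval_C, eval_one, ne_eq,
    mul_eq_zero, not_or] at hy
  obtain ⟨⟨⟨hy0, hy1⟩, hyp⟩, hyq⟩ := hy
  simpa using det_smul_one_sub_completeSubdivisionAdjMatrix_completeBipartiteGraph hp hq e
    hy0 hy1 hyp hyq

/-- `A`-characteristic polynomial of the complete subdivision
graph of $K_{p,q}$.  The exponent $pq-p-q+1$ is written as $(p-1)(q-1)$. -/
theorem stmt_19 (p q : ℕ) (hp : 1 ≤ p) (hq : 1 ≤ q) (hpq : 4 ≤ p + q)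
    (e : Fin (p * q) ≃ (completeBipartiteGraph (Fin p) (Fin q)).edgeFinset)
    (x : ℝ) :
    (x • (1 : Matrix ((Fin p ⊕ Fin q) ⊕ Fin (p * q)) ((Fin p ⊕ Fin q) ⊕ Fin (p * q)) ℝ) -
        Matrix.fromBlocks 0 (incMat (completeBipartiteGraph (Fin p) (Fin q)) e)
          (incMat (completeBipartiteGraph (Fin p) (Fin q)) e)ᵀ
          (Matrix.of (fun _ _ => (1 : ℝ)) - 1)).det
      = x * (x + 1) ^ ((p - 1) * (q - 1)) *
          (x ^ 2 + x - (p : ℝ)) ^ (q - 1) * (x ^ 2 + x - (q : ℝ)) ^ (p - 1) *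
          (x ^ 2 - ((p : ℝ) * (q : ℝ) - 1) * x - ((p : ℝ) + (q : ℝ))) :=
  stmt_19_general p q hp hq e x
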